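/- arXiv:2504.14246 — 4 statements merged into one kernel-verified Lean document; each statement's English description precedes it below -/
import Mathlib

section
/- For every k ∈ ℕ, the identity Σ_{m,n ≥ 0} a_{mn}^k · ((X−1)^m/m!) · ((Y−1)^n/n!) = (XY−1)^k/k! holds in the polynomial ring ℚ[X,Y]; the sum is finite because a_{mn}^k = 0 whenever k < max(m,n) or k > m+n, so it may be taken over all pairs (m,n) with 0 ≤ m ≤ k and 0 ≤ n ≤ k. -/
open Polynomial MvPolynomial Finset

noncomputable def bb (m n k : ℕ) : ℚ :=
  if m + n < k then 0 else
    ((m.choose (m + n - k)) * (n.choose (m + n - k)) * (m + n - k).factorial : ℕ)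

lemma bb_guard {m n k : ℕ} (h : m + n < k) : bb m n k = 0 := by simp [bb, h]

lemma choose_id (m l : ℕ) :
    ((l : ℚ) + 1) * (m.choose (l + 1)) = ((m : ℚ) - l) * (m.choose l) := by
  rcases le_or_gt (l + 1) m.succ with h | h
  · rcases Nat.lt_or_ge l m.succ with h2 | h2
    · have key := Nat.choose_succ_right_eq m l
      rcases le_or_gt l m with hlm | hlm
      · have : ((m - l : ℕ) : ℚ) = (m : ℚ) - l := by
          push_cast [Nat.cast_sub hlm]; ring
        calc ((l : ℚ) + 1) * (m.choose (l + 1))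
            = ((m.choose (l+1)) * (l+1) : ℕ) := by push_cast; ring
          _ = ((m.choose l) * (m - l) : ℕ) := by rw [key]
          _ = ((m : ℚ) - l) * (m.choose l) := by push_cast [Nat.cast_sub hlm]; ring
      · simp [Nat.choose_eq_zero_of_lt hlm, Nat.choose_eq_zero_of_lt (by omega : m < l + 1)]
    · simp [Nat.choose_eq_zero_of_lt (by omega : m < l), Nat.choose_eq_zero_of_lt (by omega : m < l + 1)]
  · simp [Nat.choose_eq_zero_of_lt (by omega : m < l), Nat.choose_eq_zero_of_lt (by omega : m < l + 1)]

lemma bb_rec (m n k : ℕ) :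
    bb m (n + 1) (k + 1) = bb m n k + ((k : ℚ) + 1 - n) * bb m n (k + 1) := by
  rcases lt_trichotomy (m + n) k with h | h | h
  · rw [bb_guard (by omega), bb_guard (by omega), bb_guard (by omega)]; ring
  · subst h
    rw [show bb m n (m + n + 1) = 0 from bb_guard (by omega)]
    simp [bb, Nat.sub_self, show m + n + 1 - (m + n + 1) = 0 from by omega,
      show ¬ (m + n + 1 < m + n + 1) from by omega, show ¬ (m + n < m + n) from by omega,
      show m + (n + 1) - (m + n + 1) = 0 from by omega,
      show ¬ (m + (n + 1) < m + n + 1) from by omega]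
  · obtain ⟨j, hj⟩ : ∃ j, m + n = k + j + 1 := ⟨m + n - k - 1, by omega⟩
    have e1 : m + (n + 1) - (k + 1) = j + 1 := by omega
    have e2 : m + n - k = j + 1 := by omega
    have e3 : m + n - (k + 1) = j := by omega
    rw [bb, bb, bb, if_neg (by omega), if_neg (by omega), if_neg (by omega), e1, e2, e3]
    have ek : (k : ℚ) + 1 - n = (m : ℚ) - j := by
      have : (m : ℚ) + n = k + j + 1 := by exact_mod_cast congrArg (Nat.cast : ℕ → ℚ) hj
      linarith
    rw [ek]
    have pascal : (n + 1).choose (j + 1) = n.choose j + n.choose (j + 1) :=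
      Nat.choose_succ_succ n j
    rw [pascal]
    have hfac : ((j + 1).factorial : ℚ) = ((j : ℚ) + 1) * (j.factorial) := by
      push_cast [Nat.factorial_succ]; ring
    have key := choose_id m j
    push_cast [hfac]
    linear_combination ((n.choose j : ℚ) * (j.factorial : ℚ)) * key

lemma bb_zero0 (m n : ℕ) : bb m (n + 1) 0 = bb m n 0 * ((0 : ℚ) - n) := by
  cases n with
  | zero => simp [bb, Nat.choose_eq_zero_of_lt (by omega : m < m + 1)]
  | succ n' =>
    have h1 : bb m (n' + 1 + 1) 0 = 0 := by
      simp [bb, Nat.choose_eq_zero_of_lt (by omega : m < m + (n' + 1 + 1))]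
    have h2 : bb m (n' + 1) 0 = 0 := by
      simp [bb, Nat.choose_eq_zero_of_lt (by omega : m < m + (n' + 1))]
    rw [h1, h2]; ring

lemma bb_diag (m : ℕ) : bb m 0 m = 1 := by
  simp [bb, Nat.sub_self]

lemma key (m n : ℕ) : descPochhammer ℚ m * descPochhammer ℚ n =
    ∑ k ∈ Finset.range (m + n + 2), Polynomial.C (bb m n k) * descPochhammer ℚ k := by
  induction n with
  | zero =>
    rw [Finset.sum_eq_single m]
    · simp [bb_diag]
    · intro k hk hkm
      rcases lt_or_gt_of_ne hkm with h | h
      · have : bb m 0 k = 0 := by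
          simp [bb, Nat.choose_eq_zero_of_lt (show 0 < m - k by omega)]
        simp [this]
      · have : bb m 0 k = 0 := bb_guard (by omega)
        simp [this]
    · intro h
      exact absurd (Finset.mem_range.mpr (by omega)) h
  | succ n ih =>
    have step : ∀ k : ℕ, descPochhammer ℚ k * (Polynomial.X - (n : ℚ[X])) =
        descPochhammer ℚ (k + 1) + Polynomial.C ((k : ℚ) - n) * descPochhammer ℚ k := by
      intro k
      rw [descPochhammer_succ_right, map_sub, Polynomial.C_eq_natCast, Polynomial.C_eq_natCast]
      ring
    calc descPochhammer ℚ m * descPochhammer ℚ (n + 1)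
        = (descPochhammer ℚ m * descPochhammer ℚ n) * (Polynomial.X - (n : ℚ[X])) := by
          rw [descPochhammer_succ_right]; ring
      _ = ∑ k ∈ Finset.range (m + n + 2),
            (Polynomial.C (bb m n k) * descPochhammer ℚ (k + 1) +
             Polynomial.C (bb m n k * ((k : ℚ) - n)) * descPochhammer ℚ k) := by
          rw [ih, Finset.sum_mul]
          refine Finset.sum_congr rfl fun k _ => ?_
          rw [mul_assoc, step k, map_mul]
          ring
      _ = ∑ k ∈ Finset.range (m + n + 2), Polynomial.C (bb m n k) * descPochhammer ℚ (k + 1) +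
          ∑ k ∈ Finset.range (m + n + 2),
            Polynomial.C (bb m n k * ((k : ℚ) - n)) * descPochhammer ℚ k := by
          rw [Finset.sum_add_distrib]
      _ = ∑ k ∈ Finset.range (m + (n + 1) + 2), Polynomial.C (bb m (n + 1) k) *
            descPochhammer ℚ k := by
          rw [show m + (n + 1) + 2 = (m + n + 2) + 1 from by omega]
          rw [Finset.sum_range_succ' (fun k => Polynomial.C (bb m (n + 1) k) * descPochhammer ℚ k)
            (m + n + 2)]
          rw [Finset.sum_range_succ'
            (fun k => Polynomial.C (bb m n k * ((k : ℚ) - n)) * descPochhammer ℚ k) (m + n + 1)]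
          have ext : ∑ k ∈ Finset.range (m + n + 2),
              Polynomial.C (bb m n (k + 1) * (((k : ℚ) + 1) - n)) * descPochhammer ℚ (k + 1) =
              ∑ k ∈ Finset.range (m + n + 1),
              Polynomial.C (bb m n (k + 1) * (((k : ℚ) + 1) - n)) * descPochhammer ℚ (k + 1) := by
            rw [Finset.sum_range_succ]
            rw [show bb m n (m + n + 1 + 1) = 0 from bb_guard (by omega)]
            simp
          have comb : ∀ k : ℕ,
              Polynomial.C (bb m (n + 1) (k + 1)) * descPochhammer ℚ (k + 1) =
              Polynomial.C (bb m n k) * descPochhammer ℚ (k + 1) +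
              Polynomial.C (bb m n (k + 1) * (((k : ℚ) + 1) - n)) * descPochhammer ℚ (k + 1) := by
            intro k
            rw [bb_rec m n k, map_add]
            ring
          rw [Finset.sum_congr rfl (fun k _ => comb k), Finset.sum_add_distrib]
          rw [show bb m (n + 1) 0 = bb m n 0 * ((0 : ℚ) - n) from bb_zero0 m n]
          push_cast
          rw [← ext]
          ring

lemma unique (c : ℕ → ℚ) : ∀ N : ℕ,
    (∑ k ∈ Finset.range N, Polynomial.C (c k) * descPochhammer ℚ k) = 0 →
    ∀ k < N, c k = 0 := by
  intro N
  induction N with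
  | zero => intro _ k hk; omega
  | succ N ih =>
    intro hsum k hk
    rw [Finset.sum_range_succ] at hsum
    have hcN : c N = 0 := by
      have hco := congrArg (fun p => Polynomial.coeff p N) hsum
      simp only [Polynomial.coeff_add, Polynomial.coeff_zero] at hco
      have h1 : (∑ j ∈ Finset.range N, Polynomial.C (c j) * descPochhammer ℚ j).coeff N = 0 := by
        rw [Polynomial.finset_sum_coeff]
        refine Finset.sum_eq_zero fun j hj => ?_
        apply Polynomial.coeff_eq_zero_of_natDegree_lt
        calc (Polynomial.C (c j) * descPochhammer ℚ j).natDegree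
            ≤ (Polynomial.C (c j)).natDegree + (descPochhammer ℚ j).natDegree :=
              Polynomial.natDegree_mul_le
          _ ≤ 0 + j := by
              gcongr
              · exact le_of_eq (Polynomial.natDegree_C _)
              · exact le_of_eq (descPochhammer_natDegree ℚ j)
          _ < N := by simpa using Finset.mem_range.mp hj
      have h2 : (Polynomial.C (c N) * descPochhammer ℚ N).coeff N = c N := by
        have hm : (descPochhammer ℚ N).Monic := monic_descPochhammer ℚ N
        rw [Polynomial.coeff_C_mul]
        have : (descPochhammer ℚ N).coeff N = 1 := by
          have := hm.coeff_natDegree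
          rwa [descPochhammer_natDegree] at this
        rw [this, mul_one]
      rw [h1, h2, zero_add] at hco
      exact hco
    rcases lt_or_eq_of_le (Nat.lt_succ_iff.mp hk) with h | h
    · apply ih _ _ h
      rw [hcN] at hsum
      simpa using hsum
    · rwa [h]

lemma a_eq_bb (a : ℕ → ℕ → ℕ → ℚ)
    (hdef : ∀ m n : ℕ, descPochhammer ℚ m * descPochhammer ℚ n =
      ∑ k ∈ Finset.range (m + n + 1), Polynomial.C (a m n k) * descPochhammer ℚ k)
    (hzero : ∀ m n k : ℕ, m + n < k → a m n k = 0) :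
    ∀ m n k : ℕ, a m n k = bb m n k := by
  intro m n k
  rcases le_or_gt k (m + n) with hk | hk
  · have key2 : descPochhammer ℚ m * descPochhammer ℚ n =
        ∑ j ∈ Finset.range (m + n + 1), Polynomial.C (bb m n j) * descPochhammer ℚ j := by
      rw [key m n, Finset.sum_range_succ,
        show bb m n (m + n + 1) = 0 from bb_guard (by omega)]
      simp
    have hdiff : (∑ j ∈ Finset.range (m + n + 1),
        Polynomial.C (a m n j - bb m n j) * descPochhammer ℚ j) = 0 := by
      have := (hdef m n).symm.trans key2
      calc (∑ j ∈ Finset.range (m + n + 1),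
            Polynomial.C (a m n j - bb m n j) * descPochhammer ℚ j)
          = ∑ j ∈ Finset.range (m + n + 1),
            (Polynomial.C (a m n j) * descPochhammer ℚ j -
             Polynomial.C (bb m n j) * descPochhammer ℚ j) := by
            refine Finset.sum_congr rfl fun j _ => ?_
            rw [map_sub]; ring
        _ = 0 := by rw [Finset.sum_sub_distrib, this, sub_self]
    have h0 := unique (fun j => a m n j - bb m n j) (m + n + 1) hdiff k (by omega)
    linarith
  · rw [hzero m n k hk, bb_guard hk]

lemma expand (u v : MvPolynomial (Fin 2) ℚ) (k : ℕ) :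
    (u + v + u * v) ^ k =
      ∑ p ∈ (Finset.range (k + 1)).sigma (fun i => Finset.range (i + 1)),
        MvPolynomial.C ((k.choose p.1 * p.1.choose p.2 : ℕ) : ℚ) *
          (u ^ p.1 * v ^ (k - p.1 + p.2)) := by
  rw [show u + v + u * v = u * (1 + v) + v from by ring, add_pow, Finset.sum_sigma]
  refine Finset.sum_congr rfl fun i hi => ?_
  rw [mul_pow, show (1 + v : MvPolynomial (Fin 2) ℚ) = v + 1 from by ring, add_pow]
  rw [Finset.mul_sum, Finset.sum_mul, Finset.sum_mul]
  refine Finset.sum_congr rfl fun j hj => ?_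
  rw [show k - i + j = j + (k - i) from by omega, pow_add, Nat.cast_mul, map_mul,
    MvPolynomial.C_eq_coe_nat, MvPolynomial.C_eq_coe_nat]
  ring

lemma coeff_id (m n k : ℕ) (hm : m ≤ k) (hn : n ≤ k) (hk : k ≤ m + n) :
    bb m n k / (m.factorial * n.factorial : ℚ) =
    ((k.choose m * m.choose (m + n - k) : ℕ) : ℚ) / k.factorial := by
  have hlm : m + n - k ≤ m := by omega
  have hln : m + n - k ≤ n := by omega
  have e : n - (m + n - k) = k - m := by omega
  rw [bb, if_neg (by omega)]
  push_cast
  rw [Nat.cast_choose ℚ hlm, Nat.cast_choose ℚ hln, Nat.cast_choose ℚ hm, e]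
  have nz : ∀ t : ℕ, ((t.factorial : ℚ)) ≠ 0 :=
    fun t => Nat.cast_ne_zero.mpr (Nat.factorial_ne_zero t)
  field_simp

/-- Let `a m n k` be the structure constants of the falling-factorial basis
`f_n = descPochhammer ℚ n` of `ℚ[X]`, i.e. `f_m * f_n = ∑_{k=0}^{m+n} a m n k • f_k`
(with `a m n k = 0` for `k > m + n`).  Then `a m n k = 0` whenever `k < max m n`, and
for every `k` one has, in `ℚ[X,Y]`,
`∑_{m ≤ k} ∑_{n ≤ k} a m n k • ((X-1)^m / m!) • ((Y-1)^n / n!) = (XY-1)^k / k!`. -/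
theorem sum_structure_constants_eq
    (a : ℕ → ℕ → ℕ → ℚ)
    (hdef : ∀ m n : ℕ, descPochhammer ℚ m * descPochhammer ℚ n =
      ∑ k ∈ Finset.range (m + n + 1), Polynomial.C (a m n k) * descPochhammer ℚ k)
    (hzero : ∀ m n k : ℕ, m + n < k → a m n k = 0) (k : ℕ) :
    (∀ m n : ℕ, k < max m n → a m n k = 0) ∧
    ∑ m ∈ Finset.range (k + 1), ∑ n ∈ Finset.range (k + 1),
        MvPolynomial.C (a m n k / (m.factorial * n.factorial : ℚ)) *
          ((MvPolynomial.X 0 - 1) ^ m * (MvPolynomial.X 1 - 1) ^ n) =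
      MvPolynomial.C (1 / (k.factorial : ℚ)) *
        ((MvPolynomial.X 0 : MvPolynomial (Fin 2) ℚ) * MvPolynomial.X 1 - 1) ^ k := by
  have hab := a_eq_bb a hdef hzero
  constructor
  · intro m n hk
    rcases le_or_gt k (m + n) with h | h
    · rw [hab, bb, if_neg (by omega)]
      rcases lt_max_iff.mp hk with h1 | h1
      · rw [Nat.choose_eq_zero_of_lt (show n < m + n - k by omega)]
        simp
      · rw [Nat.choose_eq_zero_of_lt (show m < m + n - k by omega)]
        simp
    · exact hzero m n k h
  · set u : MvPolynomial (Fin 2) ℚ := MvPolynomial.X 0 - 1 with hu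
    set v : MvPolynomial (Fin 2) ℚ := MvPolynomial.X 1 - 1 with hv
    have hxy : (MvPolynomial.X 0 : MvPolynomial (Fin 2) ℚ) * MvPolynomial.X 1 - 1 =
        u + v + u * v := by rw [hu, hv]; ring
    rw [hxy, expand u v k, Finset.mul_sum]
    rw [← Finset.sum_product' (f := fun m n =>
      MvPolynomial.C (a m n k / (m.factorial * n.factorial : ℚ)) * (u ^ m * v ^ n))]
    rw [← Finset.sum_filter_of_ne (p := fun p : ℕ × ℕ => k ≤ p.1 + p.2)
      (f := fun p : ℕ × ℕ =>
        MvPolynomial.C (a p.1 p.2 k / (p.1.factorial * p.2.factorial : ℚ)) *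
          (u ^ p.1 * v ^ p.2))
      (fun p _ hne => by
        by_contra hc
        have hc' : ¬ k ≤ p.1 + p.2 := hc
        exact hne (by simp [hzero p.1 p.2 k (by omega)]))]
    refine Finset.sum_nbij' (i := fun p : ℕ × ℕ => (⟨p.1, p.1 + p.2 - k⟩ : Σ _ : ℕ, ℕ))
      (j := fun q : Σ _ : ℕ, ℕ => ((q.1, k - q.1 + q.2) : ℕ × ℕ)) ?_ ?_ ?_ ?_ ?_
    · rintro ⟨m, n⟩ hp
      simp only [Finset.mem_filter, Finset.mem_product, Finset.mem_range] at hp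
      simp only [Finset.mem_sigma, Finset.mem_range]
      omega
    · rintro ⟨i, j⟩ hq
      simp only [Finset.mem_sigma, Finset.mem_range] at hq
      simp only [Finset.mem_filter, Finset.mem_product, Finset.mem_range]
      omega
    · rintro ⟨m, n⟩ hp
      simp only [Finset.mem_filter, Finset.mem_product, Finset.mem_range] at hp
      simp only [Prod.mk.injEq, true_and]
      omega
    · rintro ⟨i, j⟩ hq
      simp only [Finset.mem_sigma, Finset.mem_range] at hq
      show (⟨i, i + (k - i + j) - k⟩ : Σ _ : ℕ, ℕ) = ⟨i, j⟩
      have h2 : i + (k - i + j) - k = j := by omega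
      rw [h2]
    · rintro ⟨m, n⟩ hp
      simp only [Finset.mem_filter, Finset.mem_product, Finset.mem_range] at hp
      obtain ⟨⟨hm, hn⟩, hk2⟩ := hp
      have hm' : m ≤ k := by omega
      have hn' : n ≤ k := by omega
      simp only []
      rw [show k - m + (m + n - k) = n from by omega]
      rw [hab, coeff_id m n k hm' hn' hk2]
      have hc : ((k.choose m * m.choose (m + n - k) : ℕ) : ℚ) / k.factorial =
          1 / (k.factorial : ℚ) * ((k.choose m * m.choose (m + n - k) : ℕ) : ℚ) := by ring
      rw [hc, map_mul]
      ring
end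

section
/- Fix d ≥ 1. For every multi-index K = (k_1,…,k_d) ∈ ℕ^d, the identity Π_{l=1}^d (X_l·Y_l − 1)^{k_l}/k_l! = Σ_{I,J ∈ ℕ^d} a_{IJ}^K · Π_{l=1}^d ((X_l−1)^{i_l}/i_l!) · ((Y_l−1)^{j_l}/j_l!) holds in the polynomial ring ℚ[X_1,…,X_d,Y_1,…,Y_d], where the sum is finite since a_{IJ}^K = 0 unless max(i_l,j_l) ≤ k_l ≤ i_l + j_l for every l. -/
open Polynomial MvPolynomial Finset


section Aux

variable (a : ℕ → ℕ → ℕ → ℚ)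
  (hdef : ∀ m n : ℕ, descPochhammer ℚ m * descPochhammer ℚ n =
      ∑ k ∈ Finset.range (m + n + 1), Polynomial.C (a m n k) * descPochhammer ℚ k)
  (hzero : ∀ m n k : ℕ, m + n < k → a m n k = 0)

include hdef in
lemma aux_eval (m n N : ℕ) :
    ((N.descFactorial m : ℚ)) * N.descFactorial n =
      ∑ k ∈ Finset.range (m + n + 1), a m n k * N.descFactorial k := by
  have h := congrArg (Polynomial.eval (N : ℚ)) (hdef m n)
  simpa [Polynomial.eval_finset_sum, descPochhammer_eval_eq_descFactorial] using h

include hdef in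
lemma aux_zero_lt (m n k : ℕ) (h : k < m ∨ k < n) : a m n k = 0 := by
  induction k using Nat.strong_induction_on with
  | _ k IH =>
    have hE := aux_eval a hdef m n k
    have hL : ((k.descFactorial m : ℚ)) * k.descFactorial n = 0 := by
      rcases h with h | h
      · rw [Nat.descFactorial_eq_zero_iff_lt.mpr h]; push_cast; ring
      · rw [Nat.descFactorial_eq_zero_iff_lt.mpr h]; push_cast; ring
    have hk : k ∈ Finset.range (m + n + 1) := by
      simp only [Finset.mem_range]; omega
    have hsum : ∑ k' ∈ Finset.range (m + n + 1), a m n k' * k.descFactorial k'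
        = a m n k * k.descFactorial k := by
      refine Finset.sum_eq_single_of_mem k hk ?_
      intro b _ hb
      rcases lt_or_gt_of_ne hb with hb' | hb'
      · rw [IH b hb' (by omega)]; ring
      · rw [Nat.descFactorial_eq_zero_iff_lt.mpr hb']; push_cast; ring
    rw [hL, hsum, Nat.descFactorial_self] at hE
    have : (k.factorial : ℚ) ≠ 0 := Nat.cast_ne_zero.mpr k.factorial_ne_zero
    field_simp at hE
    exact (mul_eq_zero.mp hE.symm).resolve_right this

include hdef in
lemma aux_choose_mul (i j N : ℕ) :
    ((N.choose i : ℚ)) * N.choose j =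
      ∑ k ∈ Finset.range (i + j + 1),
        a i j k * (k.factorial / (i.factorial * j.factorial)) * N.choose k := by
  have hi : (i.factorial : ℚ) ≠ 0 := Nat.cast_ne_zero.mpr i.factorial_ne_zero
  have hj : (j.factorial : ℚ) ≠ 0 := Nat.cast_ne_zero.mpr j.factorial_ne_zero
  have h := aux_eval a hdef i j N
  simp only [Nat.descFactorial_eq_factorial_mul_choose, Nat.cast_mul] at h
  calc ((N.choose i : ℚ)) * N.choose j
        = ((i.factorial : ℚ) * N.choose i * ((j.factorial : ℚ) * N.choose j))
            / (i.factorial * j.factorial) := by field_simp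
      _ = (∑ k ∈ Finset.range (i + j + 1), a i j k * ((k.factorial : ℚ) * N.choose k))
            / (i.factorial * j.factorial) := by rw [h]
      _ = ∑ k ∈ Finset.range (i + j + 1),
            a i j k * ((k.factorial : ℚ) / (i.factorial * j.factorial)) * N.choose k := by
          rw [Finset.sum_div]
          refine Finset.sum_congr rfl fun k _ => ?_
          field_simp

end Aux

section Core

variable {A : Type*} [CommRing A] [Algebra ℚ A]

lemma aux_binom (x : A) (N : ℕ) :
    (1 + x) ^ N = ∑ i ∈ Finset.range (N + 1), algebraMap ℚ A (N.choose i) * x ^ i := by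
  rw [add_comm, add_pow]
  refine Finset.sum_congr rfl fun i _ => ?_
  simp [map_natCast, mul_comm]

end Core

noncomputable def auxS (a : ℕ → ℕ → ℕ → ℚ) {A : Type*} [CommRing A] [Algebra ℚ A]
    (u v : A) (k : ℕ) : A :=
  ∑ i ∈ Finset.range (k + 1), ∑ j ∈ Finset.range (k + 1),
    algebraMap ℚ A (a i j k / (i.factorial * j.factorial)) * (u ^ i * v ^ j)

section Core2

variable {A : Type*} [CommRing A] [Algebra ℚ A]
  (a : ℕ → ℕ → ℕ → ℚ)
  (hdef : ∀ m n : ℕ, descPochhammer ℚ m * descPochhammer ℚ n =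
      ∑ k ∈ Finset.range (m + n + 1), Polynomial.C (a m n k) * descPochhammer ℚ k)
  (hzero : ∀ m n k : ℕ, m + n < k → a m n k = 0)

include hdef hzero in
lemma aux_star (u v : A) (N : ℕ) :
    ∑ m ∈ Finset.range (N + 1), algebraMap ℚ A (N.choose m) * (u + v + u * v) ^ m =
      ∑ m ∈ Finset.range (N + 1),
        algebraMap ℚ A ((N.choose m) * m.factorial) * auxS a u v m := by
  have key : ∑ m ∈ Finset.range (N + 1), algebraMap ℚ A (N.choose m) * (u + v + u * v) ^ m
      = ∑ k ∈ Finset.range (2 * N + 1), algebraMap ℚ A ((N.choose k) * k.factorial) *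
          (∑ i ∈ Finset.range (N + 1), ∑ j ∈ Finset.range (N + 1),
            algebraMap ℚ A (a i j k / (i.factorial * j.factorial)) * (u ^ i * v ^ j)) := by
    calc
      ∑ m ∈ Finset.range (N + 1), algebraMap ℚ A (N.choose m) * (u + v + u * v) ^ m
          = (1 + (u + v + u * v)) ^ N := (aux_binom _ N).symm
      _ = (1 + u) ^ N * (1 + v) ^ N := by rw [← mul_pow]; congr 1; ring
      _ = ∑ i ∈ Finset.range (N + 1), ∑ j ∈ Finset.range (N + 1),
            (algebraMap ℚ A (N.choose i) * u ^ i) * (algebraMap ℚ A (N.choose j) * v ^ j) := by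
          rw [aux_binom u N, aux_binom v N, Finset.sum_mul_sum]
      _ = ∑ i ∈ Finset.range (N + 1), ∑ j ∈ Finset.range (N + 1),
            ∑ k ∈ Finset.range (2 * N + 1), algebraMap ℚ A ((N.choose k) * k.factorial) *
              (algebraMap ℚ A (a i j k / (i.factorial * j.factorial)) * (u ^ i * v ^ j)) := by
          refine Finset.sum_congr rfl fun i hi => Finset.sum_congr rfl fun j hj => ?_
          rw [Finset.mem_range] at hi hj
          have hij : (algebraMap ℚ A (N.choose i) * u ^ i) *
              (algebraMap ℚ A (N.choose j) * v ^ j)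
              = algebraMap ℚ A ((N.choose i : ℚ) * (N.choose j)) * (u ^ i * v ^ j) := by
            rw [map_mul]; ring
          rw [hij, aux_choose_mul a hdef i j N]
          have hext : ∑ k ∈ Finset.range (i + j + 1),
                a i j k * (k.factorial / (i.factorial * j.factorial)) * N.choose k
              = ∑ k ∈ Finset.range (2 * N + 1),
                a i j k * (k.factorial / (i.factorial * j.factorial)) * N.choose k := by
            refine Finset.sum_subset (Finset.range_subset_range.mpr (by omega)) ?_
            intro k _ hk
            rw [Finset.mem_range, not_lt] at hk
            rw [hzero i j k (by omega)]; ring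
          rw [hext, map_sum, Finset.sum_mul]
          refine Finset.sum_congr rfl fun k _ => ?_
          have : (a i j k * ((k.factorial : ℚ) / (i.factorial * j.factorial)) * N.choose k)
              = ((N.choose k : ℚ) * k.factorial) * (a i j k / (i.factorial * j.factorial)) := by
            ring
          rw [this, map_mul]; ring
      _ = ∑ i ∈ Finset.range (N + 1), ∑ k ∈ Finset.range (2 * N + 1),
            ∑ j ∈ Finset.range (N + 1), algebraMap ℚ A ((N.choose k) * k.factorial) *
              (algebraMap ℚ A (a i j k / (i.factorial * j.factorial)) * (u ^ i * v ^ j)) :=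
          Finset.sum_congr rfl fun i _ => Finset.sum_comm
      _ = ∑ k ∈ Finset.range (2 * N + 1), ∑ i ∈ Finset.range (N + 1),
            ∑ j ∈ Finset.range (N + 1), algebraMap ℚ A ((N.choose k) * k.factorial) *
              (algebraMap ℚ A (a i j k / (i.factorial * j.factorial)) * (u ^ i * v ^ j)) :=
          Finset.sum_comm
      _ = ∑ k ∈ Finset.range (2 * N + 1), algebraMap ℚ A ((N.choose k) * k.factorial) *
            (∑ i ∈ Finset.range (N + 1), ∑ j ∈ Finset.range (N + 1),
              algebraMap ℚ A (a i j k / (i.factorial * j.factorial)) * (u ^ i * v ^ j)) := by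
          refine Finset.sum_congr rfl fun k _ => ?_
          rw [Finset.mul_sum]
          exact Finset.sum_congr rfl fun i _ => (Finset.mul_sum _ _ _).symm
  rw [key]
  have hshrink : ∀ k ≤ N,
      (∑ i ∈ Finset.range (N + 1), ∑ j ∈ Finset.range (N + 1),
        algebraMap ℚ A (a i j k / (i.factorial * j.factorial)) * (u ^ i * v ^ j))
      = auxS a u v k := by
    intro k hk
    calc ∑ i ∈ Finset.range (N + 1), ∑ j ∈ Finset.range (N + 1),
            algebraMap ℚ A (a i j k / (i.factorial * j.factorial)) * (u ^ i * v ^ j)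
        = ∑ i ∈ Finset.range (N + 1), ∑ j ∈ Finset.range (k + 1),
            algebraMap ℚ A (a i j k / (i.factorial * j.factorial)) * (u ^ i * v ^ j) := by
          refine Finset.sum_congr rfl fun i hi =>
            (Finset.sum_subset (Finset.range_subset_range.mpr (by omega)) ?_).symm
          intro j _ hj
          simp only [Finset.mem_range, not_lt] at hj
          rw [aux_zero_lt a hdef i j k (Or.inr (by omega))]
          simp
      _ = ∑ i ∈ Finset.range (k + 1), ∑ j ∈ Finset.range (k + 1),
            algebraMap ℚ A (a i j k / (i.factorial * j.factorial)) * (u ^ i * v ^ j) := by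
          refine (Finset.sum_subset (Finset.range_subset_range.mpr (by omega)) ?_).symm
          intro i _ hi
          simp only [Finset.mem_range, not_lt] at hi
          apply Finset.sum_eq_zero
          intro j _
          rw [aux_zero_lt a hdef i j k (Or.inl (by omega))]
          simp
      _ = auxS a u v k := rfl
  have hres : ∑ m ∈ Finset.range (N + 1), (algebraMap ℚ A ((N.choose m) * m.factorial) *
          (∑ i ∈ Finset.range (N + 1), ∑ j ∈ Finset.range (N + 1),
            algebraMap ℚ A (a i j m / (i.factorial * j.factorial)) * (u ^ i * v ^ j)))
      = ∑ m ∈ Finset.range (2 * N + 1), (algebraMap ℚ A ((N.choose m) * m.factorial) *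
          (∑ i ∈ Finset.range (N + 1), ∑ j ∈ Finset.range (N + 1),
            algebraMap ℚ A (a i j m / (i.factorial * j.factorial)) * (u ^ i * v ^ j))) := by
    refine Finset.sum_subset (Finset.range_subset_range.mpr (by omega)) ?_
    intro m _ hm
    simp only [Finset.mem_range, not_lt] at hm
    rw [Nat.choose_eq_zero_of_lt (by omega)]
    simp
  rw [← hres]
  refine Finset.sum_congr rfl fun k hk => ?_
  rw [Finset.mem_range] at hk
  rw [hshrink k (by omega)]

include hdef hzero in
lemma aux_core (u v : A) (k : ℕ) :
    (u + v + u * v) ^ k = algebraMap ℚ A (k.factorial) * auxS a u v k := by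
  induction k using Nat.strong_induction_on with
  | _ k IH =>
    have hstar := aux_star a hdef hzero u v k
    rw [Finset.sum_range_succ, Finset.sum_range_succ] at hstar
    have hrest : ∑ m ∈ Finset.range k, algebraMap ℚ A (k.choose m) * (u + v + u * v) ^ m
        = ∑ m ∈ Finset.range k, algebraMap ℚ A ((k.choose m) * m.factorial) * auxS a u v m := by
      refine Finset.sum_congr rfl fun m hm => ?_
      rw [Finset.mem_range] at hm
      rw [IH m hm, map_mul]
      ring
    rw [hrest] at hstar
    have := add_left_cancel hstar
    simpa using this

end Core2

section Coord

variable {A : Type*} [CommRing A] [Algebra ℚ A]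
  (a : ℕ → ℕ → ℕ → ℚ)
  (hdef : ∀ m n : ℕ, descPochhammer ℚ m * descPochhammer ℚ n =
      ∑ k ∈ Finset.range (m + n + 1), Polynomial.C (a m n k) * descPochhammer ℚ k)
  (hzero : ∀ m n k : ℕ, m + n < k → a m n k = 0)

include hdef hzero in
lemma aux_coord (x y : A) (k : ℕ) :
    algebraMap ℚ A (1 / k.factorial) * (x * y - 1) ^ k =
      ∑ i ∈ Finset.Iic k, ∑ j ∈ Finset.Iic k,
        algebraMap ℚ A (a i j k) *
          (algebraMap ℚ A (1 / i.factorial) * (x - 1) ^ i *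
            (algebraMap ℚ A (1 / j.factorial) * (y - 1) ^ j)) := by
  have hxy : x * y - 1 = (x - 1) + (y - 1) + (x - 1) * (y - 1) := by ring
  rw [hxy, aux_core a hdef hzero (x - 1) (y - 1) k, ← mul_assoc, ← map_mul]
  have hfac : (1 / (k.factorial : ℚ)) * k.factorial = 1 := by
    field_simp
  rw [hfac, map_one, one_mul, auxS]
  have hIic : Finset.Iic k = Finset.range (k + 1) := by
    ext m; simp [Nat.lt_succ_iff]
  rw [hIic]
  refine Finset.sum_congr rfl fun i _ => Finset.sum_congr rfl fun j _ => ?_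
  rw [show a i j k / ((i.factorial : ℚ) * (j.factorial : ℚ))
      = a i j k * (1 / i.factorial) * (1 / j.factorial) by ring, map_mul, map_mul]
  ring

end Coord

/-- Multi-index version of the structure-constant identity.  Let `a m n k` be the structure
constants of the falling-factorial basis `f_n = descPochhammer ℚ n` of `ℚ[X]`
(with `a m n k = 0` for `k > m + n`), and for multi-indices `I J K : Fin d → ℕ` set
`a_{IJ}^K = ∏ l, a (I l) (J l) (K l)`.  Then in `ℚ[X_1,…,X_d,Y_1,…,Y_d]`
(variables indexed by `Fin d ⊕ Fin d`), for every `K`,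
`∏ l (X_l Y_l − 1)^{k_l}/k_l! = ∑_{I,J ≤ K} a_{IJ}^K ∏ l ((X_l−1)^{i_l}/i_l!)((Y_l−1)^{j_l}/j_l!)`,
the sum being over `I, J ≤ K` since `a_{IJ}^K = 0` unless `max (i_l) (j_l) ≤ k_l ≤ i_l + j_l`
for every `l`. -/
theorem multiindex_structure_constants_eq
    (d : ℕ) (hd : 1 ≤ d)
    (a : ℕ → ℕ → ℕ → ℚ)
    (hdef : ∀ m n : ℕ, descPochhammer ℚ m * descPochhammer ℚ n =
      ∑ k ∈ Finset.range (m + n + 1), Polynomial.C (a m n k) * descPochhammer ℚ k)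
    (hzero : ∀ m n k : ℕ, m + n < k → a m n k = 0) (K : Fin d → ℕ) :
    ∏ l : Fin d,
        (MvPolynomial.C (1 / ((K l).factorial : ℚ)) *
          ((MvPolynomial.X (Sum.inl l) : MvPolynomial (Fin d ⊕ Fin d) ℚ) *
              MvPolynomial.X (Sum.inr l) - 1) ^ (K l)) =
      ∑ I ∈ Finset.Iic K, ∑ J ∈ Finset.Iic K,
        MvPolynomial.C (∏ l : Fin d, a (I l) (J l) (K l)) *
          ∏ l : Fin d,
            (MvPolynomial.C (1 / ((I l).factorial : ℚ)) *
                (MvPolynomial.X (Sum.inl l) - 1) ^ (I l) *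
              (MvPolynomial.C (1 / ((J l).factorial : ℚ)) *
                (MvPolynomial.X (Sum.inr l) - 1) ^ (J l))) := by
  
  classical
  set A := MvPolynomial (Fin d ⊕ Fin d) ℚ
  -- the summand as a function of a pair
  set F : Fin d → ℕ × ℕ → A := fun l p =>
    MvPolynomial.C (a p.1 p.2 (K l)) *
      (MvPolynomial.C (1 / (p.1.factorial : ℚ)) * (MvPolynomial.X (Sum.inl l) - 1) ^ p.1 *
        (MvPolynomial.C (1 / (p.2.factorial : ℚ)) * (MvPolynomial.X (Sum.inr l) - 1) ^ p.2))
    with hF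
  calc ∏ l : Fin d,
        (MvPolynomial.C (1 / ((K l).factorial : ℚ)) *
          ((MvPolynomial.X (Sum.inl l) : A) * MvPolynomial.X (Sum.inr l) - 1) ^ (K l))
      = ∏ l : Fin d, ∑ p ∈ Finset.Iic (K l) ×ˢ Finset.Iic (K l), F l p := by
        refine Finset.prod_congr rfl fun l _ => ?_
        rw [Finset.sum_product]
        rw [show (MvPolynomial.C (1 / ((K l).factorial : ℚ)) : A)
            = algebraMap ℚ A (1 / ((K l).factorial : ℚ)) from rfl,
          aux_coord a hdef hzero (MvPolynomial.X (Sum.inl l)) (MvPolynomial.X (Sum.inr l)) (K l)]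
        simp only [MvPolynomial.algebraMap_eq, hF]
    _ = ∑ g ∈ Fintype.piFinset (fun l => Finset.Iic (K l) ×ˢ Finset.Iic (K l)),
          ∏ l : Fin d, F l (g l) := Finset.prod_univ_sum _ _
    _ = ∑ p ∈ Finset.Iic K ×ˢ Finset.Iic K, ∏ l : Fin d, F l (p.1 l, p.2 l) := by
        refine Finset.sum_nbij' (fun g => (fun l => (g l).1, fun l => (g l).2))
          (fun p => fun l => (p.1 l, p.2 l)) ?_ ?_ ?_ ?_ ?_
        · intro g hg
          simp only [Fintype.mem_piFinset, Finset.mem_product, Finset.mem_Iic, Pi.le_def] at hg ⊢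
          exact ⟨fun l => (hg l).1, fun l => (hg l).2⟩
        · intro p hp
          simp only [Fintype.mem_piFinset, Finset.mem_product, Finset.mem_Iic, Pi.le_def] at hp ⊢
          intro l
          exact ⟨hp.1 l, hp.2 l⟩
        · intro g _; funext l; rfl
        · intro p _; apply Prod.ext <;> rfl
        · intro g _; rfl
    _ = ∑ I ∈ Finset.Iic K, ∑ J ∈ Finset.Iic K, ∏ l : Fin d, F l (I l, J l) := by
        rw [Finset.sum_product]
    _ = ∑ I ∈ Finset.Iic K, ∑ J ∈ Finset.Iic K,
          MvPolynomial.C (∏ l : Fin d, a (I l) (J l) (K l)) *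
            ∏ l : Fin d,
              (MvPolynomial.C (1 / ((I l).factorial : ℚ)) *
                  (MvPolynomial.X (Sum.inl l) - 1) ^ (I l) *
                (MvPolynomial.C (1 / ((J l).factorial : ℚ)) *
                  (MvPolynomial.X (Sum.inr l) - 1) ^ (J l))) := by
        refine Finset.sum_congr rfl fun I _ => Finset.sum_congr rfl fun J _ => ?_
        rw [hF, map_prod, ← Finset.prod_mul_distrib]
end

section
/- Let M be a module over a commutative ℚ-algebra and let D_1,…,D_d be pairwise commuting module endomorphisms of M. For a multi-index I = (i_1,…,i_d) ∈ ℕ^d, define the endomorphism D^{{I}} := Π_{j=1}^d Π_{k=0}^{i_j−1}(D_j − k·id). Then for all multi-indices I, J ∈ ℕ^d, one has the composition formula D^{{I}} ∘ D^{{J}} = Σ_{K ∈ ℕ^d} a_{IJ}^K · D^{{K}}, where the sum is finite since a_{IJ}^K = 0 unless max(i_l,j_l) ≤ k_l ≤ i_l + j_l for every l. -/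
open Polynomial Finset

/-- For pairwise commuting module endomorphisms `D 1, …, D d` and a multi-index
`I : Fin d → ℕ`, the operator `D^{{I}} = ∏_{j} ∏_{k=0}^{i_j - 1} (D j - k • 1)`. -/
noncomputable def multiFallingOp {R M : Type*} [CommRing R] [AddCommGroup M] [Module R M]
    [Module ℚ M] [SMulCommClass ℚ R M] {d : ℕ}
    (D : Fin d → Module.End R M) (I : Fin d → ℕ) : Module.End R M :=
  (List.ofFn fun j =>
    ((List.range (I j)).map fun k => D j - (k : ℚ) • (1 : Module.End R M)).prod).prod

lemma aeval_descPochhammer_eq {E : Type*} [Ring E] [Algebra ℚ E] (T : E) (n : ℕ) :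
    Polynomial.aeval T (descPochhammer ℚ n) =
      ((List.range n).map fun k : ℕ => T - (k : ℚ) • (1 : E)).prod := by
  induction n with
  | zero => simp
  | succ n ih =>
      rw [descPochhammer_succ_right, map_mul, ih, List.range_succ, List.map_append,
        List.prod_append]
      simp [Algebra.smul_def]

lemma flatMap_pure_map {α β : Type*} (f : α → β) (l : List α) :
    (l.flatMap fun a => [f a]) = l.map f := by
  induction l with
  | nil => simp
  | cons x l ih => simp [ih]

lemma commute_aeval_right {E : Type*} [Ring E] [Algebra ℚ E] {x y : E}
    (h : Commute y x) (p : ℚ[X]) : Commute y (Polynomial.aeval x p) := by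
  induction p using Polynomial.induction_on' with
  | add p q hp hq => simpa [map_add] using hp.add_right hq
  | monomial n c =>
      rw [Polynomial.aeval_monomial]
      have hc : Commute y (algebraMap ℚ E c) := (Algebra.commutes c y).symm
      exact hc.mul_right (h.pow_right n)

/-- One-variable composition formula. -/
lemma aeval_descPochhammer_mul {E : Type*} [Ring E] [Algebra ℚ E]
    (a : ℕ → ℕ → ℕ → ℚ)
    (hdef : ∀ m n : ℕ, descPochhammer ℚ m * descPochhammer ℚ n =
      ∑ k ∈ Finset.range (m + n + 1), Polynomial.C (a m n k) * descPochhammer ℚ k)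
    (T : E) (m n : ℕ) :
    Polynomial.aeval T (descPochhammer ℚ m) * Polynomial.aeval T (descPochhammer ℚ n) =
      ∑ k ∈ Finset.Iic (m + n), a m n k • Polynomial.aeval T (descPochhammer ℚ k) := by
  have hrange : Finset.range (m + n + 1) = Finset.Iic (m + n) := by
    ext k; simp [Nat.lt_succ_iff]
  rw [← map_mul, hdef m n, map_sum, hrange]
  refine Finset.sum_congr rfl fun k _ => ?_
  rw [map_mul, aeval_C, Algebra.smul_def]

/-- Multivariable composition formula in an arbitrary `ℚ`-algebra. -/
lemma list_ofFn_aeval_descPochhammer_mul {E : Type*} [Ring E] [Algebra ℚ E]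
    (a : ℕ → ℕ → ℕ → ℚ)
    (hdef : ∀ m n : ℕ, descPochhammer ℚ m * descPochhammer ℚ n =
      ∑ k ∈ Finset.range (m + n + 1), Polynomial.C (a m n k) * descPochhammer ℚ k) :
    ∀ {d : ℕ} (T : Fin d → E) (_ : ∀ j j' : Fin d, Commute (T j) (T j'))
      (I J : Fin d → ℕ),
    (List.ofFn fun j => Polynomial.aeval (T j) (descPochhammer ℚ (I j))).prod *
      (List.ofFn fun j => Polynomial.aeval (T j) (descPochhammer ℚ (J j))).prod =
      ∑ K ∈ Finset.Iic (I + J), (∏ l, a (I l) (J l) (K l)) •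
        (List.ofFn fun j => Polynomial.aeval (T j) (descPochhammer ℚ (K j))).prod := by
  intro d
  induction d with
  | zero =>
      intro T hT I J
      have hIic : Finset.Iic (I + J) = {I + J} := by
        ext K
        simp [Finset.mem_Iic, Subsingleton.elim K (I + J)]
      rw [hIic, Finset.sum_singleton]
      simp
  | succ d ih =>
      intro T hT I J
      set T' : Fin d → E := fun j => T j.succ with hT'
      have hT'comm : ∀ j j' : Fin d, Commute (T' j) (T' j') := fun j j' => hT _ _
      set G : (Fin d → ℕ) → E :=
        fun K => (List.ofFn fun j => Polynomial.aeval (T' j) (descPochhammer ℚ (K j))).prod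
        with hG
      set P : ℕ → E := fun k => Polynomial.aeval (T 0) (descPochhammer ℚ k) with hP
      have hsplit : ∀ K : Fin (d + 1) → ℕ,
          (List.ofFn fun j => Polynomial.aeval (T j) (descPochhammer ℚ (K j))).prod
            = P (K 0) * G (fun l => K l.succ) := by
        intro K
        rw [List.ofFn_succ, List.prod_cons]
      rw [hsplit, hsplit]
      -- commute the middle factors
      have hcom : Commute (G (fun l => I l.succ)) (P (J 0)) := by
        apply Commute.list_prod_left
        intro x hx
        rw [List.mem_ofFn] at hx
        obtain ⟨j, rfl⟩ := hx
        exact commute_aeval_right ((commute_aeval_right (hT 0 j.succ) _).symm) _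
      have key : P (I 0) * G (fun l => I l.succ) * (P (J 0) * G (fun l => J l.succ))
          = (P (I 0) * P (J 0)) * (G (fun l => I l.succ) * G (fun l => J l.succ)) := by
        rw [mul_assoc, mul_assoc, ← mul_assoc (G _), hcom.eq, mul_assoc]
      rw [key, aeval_descPochhammer_mul a hdef, ih T' hT'comm, Finset.sum_mul_sum]
      -- now reindex the double sum
      rw [← Finset.sum_product']
      refine Finset.sum_nbij' (fun p => Fin.cons p.1 p.2) (fun K => (K 0, fun l => K l.succ))
        ?_ ?_ ?_ ?_ ?_
      · rintro ⟨k, K⟩ hp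
        rw [Finset.mem_product, Finset.mem_Iic, Finset.mem_Iic] at hp
        rw [Finset.mem_Iic]
        intro l
        refine Fin.cases ?_ ?_ l
        · simpa using hp.1
        · intro i
          simpa using hp.2 i
      · intro K hK
        rw [Finset.mem_Iic] at hK
        rw [Finset.mem_product, Finset.mem_Iic, Finset.mem_Iic]
        exact ⟨hK 0, fun l => hK l.succ⟩
      · rintro ⟨k, K⟩ _
        simp [Fin.cons_zero, Fin.cons_succ]
      · intro K _
        exact Fin.cons_self_tail K
      · rintro ⟨k, K⟩ _
        rw [smul_mul_smul_comm, hsplit (Fin.cons k K)]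
        rw [Fin.prod_univ_succ]
        simp [Fin.cons_zero, Fin.cons_succ, mul_smul]
        rfl

/-- Let `M` be a module over a commutative `ℚ`-algebra `R` and `D 1, …, D d` pairwise
commuting endomorphisms of `M`.  With `a m n k` the structure constants of the
falling-factorial basis of `ℚ[X]` (and `a^K_{IJ} = ∏ l, a (I l) (J l) (K l)`), one has
`D^{{I}} ∘ D^{{J}} = ∑_K a_{IJ}^K • D^{{K}}`, the sum taken over `K ≤ I + J`
(pointwise), since `a_{IJ}^K = 0` unless `max (i_l) (j_l) ≤ k_l ≤ i_l + j_l` for all `l`. -/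
theorem multiFallingOp_comp
    {R M : Type*} [CommRing R] [Algebra ℚ R] [AddCommGroup M] [Module R M]
    [Module ℚ M] [IsScalarTower ℚ R M] [SMulCommClass ℚ R M]
    {d : ℕ} (D : Fin d → Module.End R M)
    (hcomm : ∀ j j' : Fin d, Commute (D j) (D j'))
    (a : ℕ → ℕ → ℕ → ℚ)
    (hdef : ∀ m n : ℕ, descPochhammer ℚ m * descPochhammer ℚ n =
      ∑ k ∈ Finset.range (m + n + 1), Polynomial.C (a m n k) * descPochhammer ℚ k)
    (hzero : ∀ m n k : ℕ, m + n < k → a m n k = 0)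
    (I J : Fin d → ℕ) :
    multiFallingOp D I * multiFallingOp D J =
      ∑ K ∈ Finset.Iic (I + J),
        (∏ l : Fin d, a (I l) (J l) (K l)) • multiFallingOp D K := by
  have hrep : ∀ K : Fin d → ℕ, multiFallingOp D K =
      (List.ofFn fun j => Polynomial.aeval (D j) (descPochhammer ℚ (K j))).prod := by
    intro K
    unfold multiFallingOp
    congr 1
    rw [List.ofFn_inj]
    funext j
    rw [aeval_descPochhammer_eq]
    congr 1
    simp [flatMap_pure_map, List.map_map, Function.comp_def]
  simp_rw [hrep]
  exact list_ofFn_aeval_descPochhammer_mul a hdef D hcomm I J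
end

section
/- Let d ≥ 1, let S be a commutative ℚ-algebra, and let φ, ψ : ℚ[T_1,…,T_d] → S be ring homomorphisms such that ψ(T_l) is a unit of S for every l. Then for every polynomial r ∈ ℚ[T_1,…,T_d], the logarithmic Taylor formula φ(r) = Σ_{I ∈ ℕ^d} ψ(∂^{{I}}(r)) · Π_{l=1}^d (φ(T_l)·ψ(T_l)^{−1} − 1)^{i_l} / I! holds, where the sum is finite because ∂^{{I}}(r) = 0 whenever i_l exceeds the degree of r in T_l for some l. -/
open MvPolynomial Finset

/-- The iterated "falling" product of an operator `θ` on an abelian group: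
`fallingOp θ n = (θ - (n-1)•id) ∘ ⋯ ∘ (θ - id) ∘ θ`, with `fallingOp θ 0 = id`. -/
def fallingOp {M : Type*} [AddCommGroup M] (θ : M → M) : ℕ → M → M
  | 0 => id
  | n + 1 => fun m => θ (fallingOp θ n m) - n • fallingOp θ n m

/-- The `l`-th logarithmic derivation `∂_l = T_l · ∂/∂T_l` on `ℚ[T_1,…,T_d]`. -/
noncomputable def logDeriv' (d : ℕ) (l : Fin d) (p : MvPolynomial (Fin d) ℚ) :
    MvPolynomial (Fin d) ℚ :=
  MvPolynomial.X l * MvPolynomial.pderiv l p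

/-- The operator `∂^{{I}} = ∏_l ∏_{k=0}^{i_l-1} (∂_l - k)` on `ℚ[T_1,…,T_d]`, for a
multi-index `I : Fin d → ℕ` (the commuting factors are composed in any fixed order). -/
noncomputable def logDerivMulti (d : ℕ) (I : Fin d → ℕ) :
    MvPolynomial (Fin d) ℚ → MvPolynomial (Fin d) ℚ :=
  (List.ofFn fun l : Fin d => fallingOp (logDeriv' d l) (I l)).foldr (· ∘ ·) id

lemma logDeriv'_monomial (d : ℕ) (l : Fin d) (s : Fin d →₀ ℕ) (c : ℚ) :
    logDeriv' d l (monomial s c) = monomial s ((s l : ℚ) * c) := by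
  rw [logDeriv', pderiv_monomial, X, monomial_mul]
  rcases Nat.eq_zero_or_pos (s l) with h | h
  · simp [h]
  · rw [add_tsub_cancel_of_le (by simpa using Nat.one_le_iff_ne_zero.mpr h.ne' : Finsupp.single l 1 ≤ s)]
    ring_nf

lemma fallingOp_monomial (d : ℕ) (l : Fin d) (n : ℕ) (s : Fin d →₀ ℕ) (c : ℚ) :
    fallingOp (logDeriv' d l) n (monomial s c) =
      monomial s (((s l).descFactorial n : ℚ) * c) := by
  induction n with
  | zero => simp [fallingOp]
  | succ n ih =>
    simp only [fallingOp]
    rw [ih, logDeriv'_monomial]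
    rw [show (n : ℕ) • (monomial s (((s l).descFactorial n : ℚ) * c) : MvPolynomial (Fin d) ℚ) =
        monomial s ((n : ℚ) * (((s l).descFactorial n : ℚ) * c)) by
      rw [smul_monomial]; norm_num]
    rw [← map_sub, Nat.descFactorial_succ]
    congr 1
    rcases le_or_gt n (s l) with h | h
    · push_cast [Nat.cast_sub h]; ring
    · rw [Nat.descFactorial_eq_zero_iff_lt.2 h]
      have : s l - n = 0 := by omega
      rw [this]; push_cast; ring

lemma foldr_monomial (d : ℕ) (I : Fin d → ℕ) (L : List (Fin d)) (s : Fin d →₀ ℕ) (c : ℚ) :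
    ((L.map fun l => fallingOp (logDeriv' d l) (I l)).foldr (· ∘ ·) id) (monomial s c) =
      monomial s ((L.map fun l => ((s l).descFactorial (I l) : ℚ)).prod * c) := by
  induction L with
  | nil => simp
  | cons a t ih =>
    simp only [List.map_cons, List.foldr_cons, Function.comp_apply, ih, fallingOp_monomial,
      List.prod_cons]
    ring_nf

lemma logDerivMulti_monomial (d : ℕ) (I : Fin d → ℕ) (s : Fin d →₀ ℕ) (c : ℚ) :
    logDerivMulti d I (monomial s c) =
      monomial s ((∏ l : Fin d, ((s l).descFactorial (I l) : ℚ)) * c) := by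
  rw [logDerivMulti, List.ofFn_eq_map, foldr_monomial]
  congr 1

lemma logDeriv'_add (d : ℕ) (l : Fin d) (p q : MvPolynomial (Fin d) ℚ) :
    logDeriv' d l (p + q) = logDeriv' d l p + logDeriv' d l q := by
  simp [logDeriv', mul_add]

lemma fallingOp_add (d : ℕ) (l : Fin d) (n : ℕ) (p q : MvPolynomial (Fin d) ℚ) :
    fallingOp (logDeriv' d l) n (p + q) =
      fallingOp (logDeriv' d l) n p + fallingOp (logDeriv' d l) n q := by
  induction n with
  | zero => rfl
  | succ n ih =>
    simp only [fallingOp, ih, logDeriv'_add, smul_add]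
    abel_nf

lemma foldr_add (d : ℕ) (I : Fin d → ℕ) (L : List (Fin d)) (p q : MvPolynomial (Fin d) ℚ) :
    ((L.map fun l => fallingOp (logDeriv' d l) (I l)).foldr (· ∘ ·) id) (p + q) =
      ((L.map fun l => fallingOp (logDeriv' d l) (I l)).foldr (· ∘ ·) id) p +
      ((L.map fun l => fallingOp (logDeriv' d l) (I l)).foldr (· ∘ ·) id) q := by
  induction L with
  | nil => rfl
  | cons a t ih => simp only [List.map_cons, List.foldr_cons, Function.comp_apply, ih,
      fallingOp_add]

lemma logDerivMulti_add (d : ℕ) (I : Fin d → ℕ) (p q : MvPolynomial (Fin d) ℚ) :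
    logDerivMulti d I (p + q) = logDerivMulti d I p + logDerivMulti d I q := by
  rw [logDerivMulti, List.ofFn_eq_map, foldr_add]

lemma logDerivMulti_zero (d : ℕ) (I : Fin d → ℕ) : logDerivMulti d I 0 = 0 := by
  have := logDerivMulti_monomial d I 0 0
  simpa using this

lemma logDerivMulti_sum {α : Type*} (d : ℕ) (I : Fin d → ℕ) (t : Finset α)
    (f : α → MvPolynomial (Fin d) ℚ) :
    logDerivMulti d I (∑ a ∈ t, f a) = ∑ a ∈ t, logDerivMulti d I (f a) := by
  classical
  induction t using Finset.induction with
  | empty => simpa using logDerivMulti_zero d I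
  | insert _ _ h ih => rw [Finset.sum_insert h, Finset.sum_insert h, logDerivMulti_add, ih]

lemma Iic_eq_range (n : ℕ) : Finset.Iic n = Finset.range (n + 1) := by
  ext; simp [Nat.lt_succ_iff]

set_option maxHeartbeats 1000000 in
lemma taylor_monomial (d : ℕ) {S : Type*} [CommRing S] [Algebra ℚ S]
    (φ ψ : MvPolynomial (Fin d) ℚ →+* S)
    (hψ : ∀ l : Fin d, IsUnit (ψ (X l)))
    (N : Fin d → ℕ) (s : Fin d →₀ ℕ) (hs : ∀ l, s l ≤ N l) (c : ℚ) :
    φ (monomial s c) = ∑ I ∈ Finset.Iic N,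
      algebraMap ℚ S (∏ l : Fin d, 1 / ((I l).factorial : ℚ)) *
        ψ (logDerivMulti d I (monomial s c)) *
        ∏ l : Fin d, (φ (X l) * Ring.inverse (ψ (X l)) - 1) ^ (I l) := by
  have hC : ∀ (χ : MvPolynomial (Fin d) ℚ →+* S) (q : ℚ), χ (C q) = algebraMap ℚ S q := by
    intro χ q
    exact RingHom.congr_fun (RingHom.ext_rat (χ.comp C) ((algebraMap ℚ S))) q
  have hmono : ∀ (χ : MvPolynomial (Fin d) ℚ →+* S) (a : ℚ),
      χ (monomial s a) = algebraMap ℚ S a * ∏ l : Fin d, χ (X l) ^ s l := by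
    intro χ a
    rw [show (monomial s a : MvPolynomial (Fin d) ℚ) = C a * ∏ l : Fin d, X l ^ s l by
      rw [monomial_eq, Finsupp.prod_fintype]; intro _; exact pow_zero _]
    rw [map_mul, map_prod, hC]
    simp [map_pow]
  -- rewrite each term
  have hterm : ∀ I ∈ Finset.Iic N,
      algebraMap ℚ S (∏ l : Fin d, 1 / ((I l).factorial : ℚ)) *
        ψ (logDerivMulti d I (monomial s c)) *
        ∏ l : Fin d, (φ (X l) * Ring.inverse (ψ (X l)) - 1) ^ (I l) =
      algebraMap ℚ S c * ∏ l : Fin d,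
        (((s l).choose (I l) : S) * ψ (X l) ^ s l *
          (φ (X l) * Ring.inverse (ψ (X l)) - 1) ^ (I l)) := by
    intro I _
    rw [logDerivMulti_monomial, hmono, map_mul]
    have h1 : (algebraMap ℚ S) (∏ l : Fin d, 1 / ((I l).factorial : ℚ)) *
        (algebraMap ℚ S) (∏ l : Fin d, ((s l).descFactorial (I l) : ℚ)) =
        ∏ l : Fin d, (((s l).choose (I l) : S)) := by
      rw [← map_mul, ← Finset.prod_mul_distrib, map_prod]
      refine Finset.prod_congr rfl fun l _ => ?_
      rw [show (1 / ((I l).factorial : ℚ) * ((s l).descFactorial (I l) : ℚ)) =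
          (((s l).choose (I l)) : ℚ) by
        rw [Nat.descFactorial_eq_factorial_mul_choose, Nat.cast_mul]
        field_simp]
      simp
    rw [Finset.prod_mul_distrib, Finset.prod_mul_distrib, ← h1]
    ring
  rw [Finset.sum_congr rfl hterm]
  rw [show Finset.Iic N = Fintype.piFinset fun l => Finset.Iic (N l) from rfl]
  rw [← Finset.mul_sum]
  rw [show (∑ I ∈ Fintype.piFinset fun l => Finset.Iic (N l), ∏ l : Fin d,
      (((s l).choose (I l) : S) * ψ (X l) ^ s l *
        (φ (X l) * Ring.inverse (ψ (X l)) - 1) ^ (I l))) =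
      ∏ l : Fin d, ∑ i ∈ Finset.Iic (N l), (((s l).choose i : S) * ψ (X l) ^ s l *
        (φ (X l) * Ring.inverse (ψ (X l)) - 1) ^ i) from
    (Finset.prod_univ_sum (fun l => Finset.Iic (N l))
      (fun l i => ((s l).choose i : S) * ψ (X l) ^ s l *
        (φ (X l) * Ring.inverse (ψ (X l)) - 1) ^ i)).symm]
  have hcol : ∀ l : Fin d,
      (∑ i ∈ Finset.Iic (N l), ((s l).choose i : S) * ψ (X l) ^ s l *
        (φ (X l) * Ring.inverse (ψ (X l)) - 1) ^ i) = φ (X l) ^ s l := by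
    intro l
    rw [← Finset.sum_subset (Finset.Iic_subset_Iic.2 (hs l))
      (fun i _ hi => by
        rw [Nat.choose_eq_zero_of_lt (lt_of_not_ge (by simpa using hi))]
        simp)]
    rw [Iic_eq_range]
    have := add_pow (φ (X l) * Ring.inverse (ψ (X l)) - 1) 1 (s l)
    rw [sub_add_cancel] at this
    calc ∑ i ∈ Finset.range (s l + 1), ((s l).choose i : S) * ψ (X l) ^ s l *
          (φ (X l) * Ring.inverse (ψ (X l)) - 1) ^ i
        = ψ (X l) ^ s l * ∑ i ∈ Finset.range (s l + 1),
            (φ (X l) * Ring.inverse (ψ (X l)) - 1) ^ i * 1 ^ (s l - i) *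
              ((s l).choose i : S) := by
          rw [Finset.mul_sum]; exact Finset.sum_congr rfl fun i _ => by ring
      _ = ψ (X l) ^ s l * (φ (X l) * Ring.inverse (ψ (X l))) ^ s l := by rw [← this]
      _ = (ψ (X l) * (φ (X l) * Ring.inverse (ψ (X l)))) ^ s l := by rw [← mul_pow]
      _ = φ (X l) ^ s l := by
          rw [show ψ (X l) * (φ (X l) * Ring.inverse (ψ (X l))) =
              φ (X l) * (ψ (X l) * Ring.inverse (ψ (X l))) by ring,
            Ring.mul_inverse_cancel _ (hψ l), mul_one]
  rw [Finset.prod_congr rfl fun l _ => hcol l, hmono]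

/-- Logarithmic Taylor formula.  Let `S` be a commutative `ℚ`-algebra and
`φ ψ : ℚ[T_1,…,T_d] → S` ring homomorphisms with each `ψ T_l` a unit.  Then for every
polynomial `r`,
`φ r = ∑_I ψ (∂^{{I}} r) · ∏_l (φ T_l · (ψ T_l)⁻¹ − 1)^{i_l} / I!`,
the sum being finite: it may be taken over the multi-indices `I` with
`i_l ≤ deg_{T_l} r` for all `l`, since `∂^{{I}} r = 0` otherwise. -/
theorem logarithmic_taylor_formula
    (d : ℕ) (hd : 1 ≤ d) {S : Type*} [CommRing S] [Algebra ℚ S]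
    (φ ψ : MvPolynomial (Fin d) ℚ →+* S)
    (hψ : ∀ l : Fin d, IsUnit (ψ (MvPolynomial.X l)))
    (r : MvPolynomial (Fin d) ℚ) :
    φ r = ∑ I ∈ Finset.Iic (fun l : Fin d => r.degreeOf l),
      algebraMap ℚ S (∏ l : Fin d, 1 / ((I l).factorial : ℚ)) *
        ψ (logDerivMulti d I r) *
        ∏ l : Fin d,
          (φ (MvPolynomial.X l) * Ring.inverse (ψ (MvPolynomial.X l)) - 1) ^ (I l) := by
  conv_lhs => rw [r.as_sum]
  rw [map_sum]
  rw [Finset.sum_congr rfl fun s hs =>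
    taylor_monomial d φ ψ hψ (fun l => r.degreeOf l) s
      (fun l => monomial_le_degreeOf l hs) (coeff s r)]
  rw [Finset.sum_comm]
  refine Finset.sum_congr rfl fun I _ => ?_
  rw [← Finset.sum_mul, ← Finset.mul_sum, ← map_sum ψ, ← logDerivMulti_sum, ← r.as_sum]
end
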